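/- Let (x*, y*) be the unconstrained solution and (x_p*, y_p*) ∈ X × Y the constrained solution. Suppose U_Xᵀ A_ff U_X and U_Yᵀ A_ss U_Y are invertible, set c1 := U_X (U_Xᵀ A_ff U_X)^{-1} U_Xᵀ, c5 := U_Y (U_Yᵀ A_ss U_Y)^{-1} U_Yᵀ, m_x := σ_min(U_Xᵀ A_ff U_X), m̃_y := σ_min(U_Yᵀ A_ss U_Y), and suppose I − c1 A_fs c5 A_sf is invertible with κ := ‖(I − c1 A_fs c5 A_sf)^{-1}‖₂. Then x_p* − x* = (I − c1 A_fs c5 A_sf)^{-1}[(I − c1 A_ff)(Π_X x* − x*) − c1 A_fs (I − c5 A_ss)(Π_Y y* − y*)], and consequently ‖x_p* − x*‖² ≤ 2κ²(1 + ‖A_ff‖₂/m_x)² ε_x² + 2κ²(‖A_fs‖₂/m_x)²(1 + ‖A_ss‖₂/m̃_y)² ε_y², where ε_x := ‖Π_X x* − x*‖ and ε_y := ‖Π_Y y* − y*‖. -/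

import Mathlib

/-!
Applying `c1` to the Galerkin condition `Π_X (A_ff x_p + A_fs y_p - b1) = 0`, and using
`c1 Π_X = c1` and `c1 A_ff Π_X = Π_X` (with `Π_X x_p = x_p`), gives
`x_p - x* = (I - c1 A_ff)(Π_X x* - x*) - c1 A_fs (y_p - y*)`, and symmetrically for `y_p - y*`.
Substituting the second error equation into the first eliminates `y_p - y*`. For the bound,
`‖c1 z‖ ≤ ‖z‖ / m_x` since `U_X` is an isometry, `U_Xᵀ` a contraction and `σ_min` controls the
inverse of `U_Xᵀ A_ff U_X`; finally `(s + t)² ≤ 2 s² + 2 t²`.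
-/

open Matrix MeasureTheory Finset
open scoped BigOperators

noncomputable section
namespace TTSA

abbrev E (n : ℕ) : Type := EuclideanSpace ℝ (Fin n)

def mv {k l : ℕ} (M : Matrix (Fin k) (Fin l) ℝ) (x : E l) : E k :=
  Matrix.toEuclideanLin M x

def specNorm {k l : ℕ} (M : Matrix (Fin k) (Fin l) ℝ) : ℝ :=
  ‖LinearMap.toContinuousLinearMap (Matrix.toEuclideanLin M)‖

def sigmaMin {k : ℕ} (M : Matrix (Fin k) (Fin k) ℝ) : ℝ :=
  sInf ((fun v : E k => ‖mv M v‖) '' {v | ‖v‖ = 1})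

def resolvent {k l : ℕ} (U : Matrix (Fin k) (Fin l) ℝ) (A : Matrix (Fin k) (Fin k) ℝ) :
    Matrix (Fin k) (Fin k) ℝ :=
  U * (Uᵀ * A * U)⁻¹ * Uᵀ

section MatrixAction

variable {k l p : ℕ}

lemma mul_mv (M : Matrix (Fin k) (Fin l) ℝ) (N : Matrix (Fin l) (Fin p) ℝ) (x : E p) :
    mv (M * N) x = mv M (mv N x) := by
  simp [mv]

lemma one_mv (x : E k) : mv 1 x = x := by
  simp [mv]

lemma sub_mv (M N : Matrix (Fin k) (Fin l) ℝ) (x : E l) : mv (M - N) x = mv M x - mv N x := by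
  simp [mv]

lemma mv_add (M : Matrix (Fin k) (Fin l) ℝ) (x y : E l) : mv M (x + y) = mv M x + mv M y :=
  map_add (toEuclideanLin M) x y

lemma mv_sub (M : Matrix (Fin k) (Fin l) ℝ) (x y : E l) : mv M (x - y) = mv M x - mv M y :=
  map_sub (toEuclideanLin M) x y

lemma mv_zero (M : Matrix (Fin k) (Fin l) ℝ) : mv M 0 = 0 :=
  map_zero (toEuclideanLin M)

lemma mv_smul (M : Matrix (Fin k) (Fin l) ℝ) (c : ℝ) (x : E l) : mv M (c • x) = c • mv M x :=
  map_smul (toEuclideanLin M) c x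

lemma nonsing_inv_mv_mv {M : Matrix (Fin k) (Fin k) ℝ} (hM : IsUnit M) (x : E k) :
    mv M⁻¹ (mv M x) = x := by
  rw [← mul_mv, nonsing_inv_mul M ((isUnit_iff_isUnit_det M).mp hM), one_mv]

lemma mv_nonsing_inv_mv {M : Matrix (Fin k) (Fin k) ℝ} (hM : IsUnit M) (x : E k) :
    mv M (mv M⁻¹ x) = x := by
  rw [← mul_mv, mul_nonsing_inv M ((isUnit_iff_isUnit_det M).mp hM), one_mv]

lemma inner_mv_left (M : Matrix (Fin k) (Fin l) ℝ) (x : E l) (y : E k) :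
    inner ℝ (mv M x) y = inner ℝ x (mv Mᵀ y) := by
  rw [← conjTranspose_eq_transpose_of_trivial, mv, mv, toEuclideanLin_conjTranspose_eq_adjoint,
    LinearMap.adjoint_inner_right]

end MatrixAction

section Norms

variable {k l : ℕ}

lemma norm_mv_le (M : Matrix (Fin k) (Fin l) ℝ) (x : E l) : ‖mv M x‖ ≤ specNorm M * ‖x‖ :=
  (LinearMap.toContinuousLinearMap (toEuclideanLin M)).le_opNorm x

lemma specNorm_nonneg (M : Matrix (Fin k) (Fin l) ℝ) : 0 ≤ specNorm M :=
  norm_nonneg _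

lemma norm_mv_of_transpose_mul_self {U : Matrix (Fin k) (Fin l) ℝ} (hU : Uᵀ * U = 1) (x : E l) :
    ‖mv U x‖ = ‖x‖ := by
  rw [← sq_eq_sq₀ (norm_nonneg _) (norm_nonneg _), ← real_inner_self_eq_norm_sq,
    ← real_inner_self_eq_norm_sq, inner_mv_left, ← mul_mv, hU, one_mv]

lemma norm_mv_transpose_le {U : Matrix (Fin k) (Fin l) ℝ} (hU : Uᵀ * U = 1) (z : E k) :
    ‖mv Uᵀ z‖ ≤ ‖z‖ := by
  have h : ‖mv Uᵀ z‖ ^ 2 ≤ ‖mv Uᵀ z‖ * ‖z‖ :=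
    calc ‖mv Uᵀ z‖ ^ 2 = inner ℝ (mv U (mv Uᵀ z)) z := by
          rw [inner_mv_left, real_inner_self_eq_norm_sq]
      _ ≤ ‖mv U (mv Uᵀ z)‖ * ‖z‖ := real_inner_le_norm _ _
      _ = ‖mv Uᵀ z‖ * ‖z‖ := by rw [norm_mv_of_transpose_mul_self hU]
  nlinarith [norm_nonneg (mv Uᵀ z), norm_nonneg z]

lemma sigmaMin_nonneg (M : Matrix (Fin k) (Fin k) ℝ) : 0 ≤ sigmaMin M :=
  Real.sInf_nonneg (by rintro _ ⟨v, -, rfl⟩; exact norm_nonneg _)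

lemma sigmaMin_mul_norm_le (M : Matrix (Fin k) (Fin k) ℝ) (v : E k) :
    sigmaMin M * ‖v‖ ≤ ‖mv M v‖ := by
  rcases eq_or_ne v 0 with rfl | hv
  · simp [mv_zero]
  have hv' : 0 < ‖v‖ := norm_pos_iff.mpr hv
  rw [← le_div_iff₀ hv']
  refine csInf_le ⟨0, ?_⟩ ⟨‖v‖⁻¹ • v, ?_, ?_⟩
  · rintro _ ⟨w, -, rfl⟩
    exact norm_nonneg _
  · simp [norm_smul, hv'.ne']
  · simp [mv_smul, norm_smul, div_eq_inv_mul]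

lemma sigmaMin_pos (hk : 0 < k) {M : Matrix (Fin k) (Fin k) ℝ} (hM : IsUnit M) :
    0 < sigmaMin M := by
  have hS : IsCompact {v : E k | ‖v‖ = 1} := by
    simpa [Metric.sphere, dist_eq_norm] using isCompact_sphere (0 : E k) 1
  have hne : {v : E k | ‖v‖ = 1}.Nonempty := ⟨EuclideanSpace.single ⟨0, hk⟩ 1, by simp⟩
  have hcont : Continuous fun v : E k => ‖mv M v‖ :=
    (LinearMap.continuous_of_finiteDimensional (toEuclideanLin M)).norm
  obtain ⟨v, hv, hσ⟩ := (hS.image hcont).sInf_mem (hne.image _)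
  rw [sigmaMin, ← hσ, norm_pos_iff]
  intro h
  have : v = 0 := by rw [← nonsing_inv_mv_mv hM v, h, mv_zero]
  simp [this] at hv

lemma norm_mv_nonsing_inv_le {M : Matrix (Fin k) (Fin k) ℝ} (hM : IsUnit M) (w : E k) :
    ‖mv M⁻¹ w‖ ≤ ‖w‖ / sigmaMin M := by
  rcases Nat.eq_zero_or_pos k with rfl | hk
  · simp [Subsingleton.elim w 0, mv_zero]
  rw [le_div_iff₀ (sigmaMin_pos hk hM), mul_comm]
  simpa [mv_nonsing_inv_mv hM] using sigmaMin_mul_norm_le M (mv M⁻¹ w)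

end Norms

section Resolvent

variable {k k' l : ℕ} (U : Matrix (Fin k) (Fin l) ℝ) (A : Matrix (Fin k) (Fin k) ℝ)

lemma norm_mv_resolvent_le (hU : Uᵀ * U = 1) (hA : IsUnit (Uᵀ * A * U)) (z : E k) :
    ‖mv (resolvent U A) z‖ ≤ ‖z‖ / sigmaMin (Uᵀ * A * U) :=
  calc ‖mv (resolvent U A) z‖ = ‖mv (Uᵀ * A * U)⁻¹ (mv Uᵀ z)‖ := by
        rw [resolvent, mul_mv, mul_mv, norm_mv_of_transpose_mul_self hU]
    _ ≤ ‖mv Uᵀ z‖ / sigmaMin (Uᵀ * A * U) := norm_mv_nonsing_inv_le hA _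
    _ ≤ ‖z‖ / sigmaMin (Uᵀ * A * U) :=
        div_le_div_of_nonneg_right (norm_mv_transpose_le hU z) (sigmaMin_nonneg _)

lemma norm_mv_resolvent_mul_le (hU : Uᵀ * U = 1) (hA : IsUnit (Uᵀ * A * U))
    (C : Matrix (Fin k) (Fin k') ℝ) (z : E k') :
    ‖mv (resolvent U A * C) z‖ ≤ specNorm C / sigmaMin (Uᵀ * A * U) * ‖z‖ :=
  calc ‖mv (resolvent U A * C) z‖ ≤ ‖mv C z‖ / sigmaMin (Uᵀ * A * U) := by
        rw [mul_mv]
        exact norm_mv_resolvent_le U A hU hA _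
    _ ≤ specNorm C * ‖z‖ / sigmaMin (Uᵀ * A * U) :=
        div_le_div_of_nonneg_right (norm_mv_le C z) (sigmaMin_nonneg _)
    _ = specNorm C / sigmaMin (Uᵀ * A * U) * ‖z‖ := by ring

lemma norm_mv_one_sub_resolvent_mul_le (hU : Uᵀ * U = 1) (hA : IsUnit (Uᵀ * A * U)) (w : E k) :
    ‖mv (1 - resolvent U A * A) w‖ ≤ (1 + specNorm A / sigmaMin (Uᵀ * A * U)) * ‖w‖ :=
  calc ‖mv (1 - resolvent U A * A) w‖ ≤ ‖w‖ + ‖mv (resolvent U A * A) w‖ := by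
        rw [sub_mv, one_mv]
        exact norm_sub_le _ _
    _ ≤ ‖w‖ + specNorm A / sigmaMin (Uᵀ * A * U) * ‖w‖ := by
        gcongr
        exact norm_mv_resolvent_mul_le U A hU hA A w
    _ = (1 + specNorm A / sigmaMin (Uᵀ * A * U)) * ‖w‖ := by ring

lemma resolvent_mul_proj (hU : Uᵀ * U = 1) : resolvent U A * (U * Uᵀ) = resolvent U A := by
  rw [resolvent, Matrix.mul_assoc, ← Matrix.mul_assoc Uᵀ, hU, Matrix.one_mul]

lemma resolvent_mul_mul_proj (hA : IsUnit (Uᵀ * A * U)) :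
    resolvent U A * A * (U * Uᵀ) = U * Uᵀ := by
  calc resolvent U A * A * (U * Uᵀ) = U * ((Uᵀ * A * U)⁻¹ * (Uᵀ * A * U)) * Uᵀ := by
        simp only [resolvent, Matrix.mul_assoc]
    _ = U * Uᵀ := by
        rw [nonsing_inv_mul _ ((isUnit_iff_isUnit_det _).mp hA), Matrix.mul_one]

lemma galerkin_error (C : Matrix (Fin k) (Fin k') ℝ) (b : E k) (hU : Uᵀ * U = 1)
    (hA : IsUnit (Uᵀ * A * U)) {p x : E k} {q y : E k'} (hp : p ∈ Set.range (mv U))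
    (hsol : mv (U * Uᵀ) (mv A p + mv C q - b) = 0) (hexact : mv A x + mv C y = b) :
    p - x = mv (1 - resolvent U A * A) (mv (U * Uᵀ) x - x) - mv (resolvent U A * C) (q - y) := by
  have hRAP (z : E k) : mv (resolvent U A) (mv A (mv (U * Uᵀ) z)) = mv (U * Uᵀ) z := by
    rw [← mul_mv, ← mul_mv, resolvent_mul_mul_proj U A hA]
  have hPp : mv (U * Uᵀ) p = p := by
    obtain ⟨a, rfl⟩ := hp
    rw [← mul_mv, Matrix.mul_assoc, hU, Matrix.mul_one]
  have h0 : mv (resolvent U A) (mv A p + mv C q - b) = 0 := by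
    rw [← resolvent_mul_proj U A hU, mul_mv, hsol, mv_zero]
  have hRAp : mv (resolvent U A) (mv A p) = p := by simpa only [hPp] using hRAP p
  rw [← hexact, mv_sub, mv_add, mv_add, hRAp] at h0
  simp only [sub_mv, one_mv, mv_sub, mul_mv (resolvent U A), hRAP]
  linear_combination (norm := module) h0

end Resolvent

lemma mv_one_sub_mul_of_coupled {k l : ℕ} {M : Matrix (Fin k) (Fin l) ℝ}
    {N : Matrix (Fin l) (Fin k) ℝ} {x u : E k} {y v : E l}
    (hx : x = u - mv M y) (hy : y = v - mv N x) : mv (1 - M * N) x = u - mv M v := by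
  have hNx : mv N x = v - y := by rw [hy]; abel
  rw [sub_mv, one_mv, mul_mv, hNx, mv_sub, hx]
  abel

lemma sq_le_of_le_mul_add {t κ s s' : ℝ} (ht : 0 ≤ t) (h : t ≤ κ * (s + s')) :
    t ^ 2 ≤ 2 * κ ^ 2 * s ^ 2 + 2 * κ ^ 2 * s' ^ 2 :=
  calc t ^ 2 ≤ κ ^ 2 * (s + s') ^ 2 := by
        rw [← mul_pow]
        exact pow_le_pow_left₀ ht h 2
    _ ≤ κ ^ 2 * (2 * (s ^ 2 + s' ^ 2)) := mul_le_mul_of_nonneg_left add_sq_le (sq_nonneg κ)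
    _ = 2 * κ ^ 2 * s ^ 2 + 2 * κ ^ 2 * s' ^ 2 := by ring

/-- closed-form approximation error for the fast component after
eliminating the cross-term, and the resulting bound in terms of the
best-approximation errors `ε_x = ‖Π_X x* - x*‖`, `ε_y = ‖Π_Y y* - y*‖`.
Here `c1 = resolvent U_X A_ff`, `c5 = resolvent U_Y A_ss`,
`m_x = σ_min(U_Xᵀ A_ff U_X)`, `m̃_y = σ_min(U_Yᵀ A_ss U_Y)`, and
`κ = ‖(I - c1 A_fs c5 A_sf)⁻¹‖₂`. -/
theorem fast_approximation_error_bound {n m d r : ℕ}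
    (Aff : Matrix (Fin n) (Fin n) ℝ) (Afs : Matrix (Fin n) (Fin m) ℝ)
    (Asf : Matrix (Fin m) (Fin n) ℝ) (Ass : Matrix (Fin m) (Fin m) ℝ)
    (b1 : E n) (b2 : E m)
    (UX : Matrix (Fin n) (Fin d) ℝ) (UY : Matrix (Fin m) (Fin r) ℝ)
    (hUX : UXᵀ * UX = 1) (hUY : UYᵀ * UY = 1)
    (xs : E n) (ys : E m)
    (hxs : mv Aff xs + mv Afs ys = b1) (hys : mv Asf xs + mv Ass ys = b2)
    (xp : E n) (yp : E m)
    (hxp : xp ∈ Set.range (mv UX)) (hyp : yp ∈ Set.range (mv UY))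
    (hsolx : mv (UX * UXᵀ) (mv Aff xp + mv Afs yp - b1) = 0)
    (hsoly : mv (UY * UYᵀ) (mv Asf xp + mv Ass yp - b2) = 0)
    (h1 : IsUnit (UXᵀ * Aff * UX)) (h5 : IsUnit (UYᵀ * Ass * UY))
    (hcoup : IsUnit ((1 : Matrix (Fin n) (Fin n) ℝ) -
      resolvent UX Aff * Afs * resolvent UY Ass * Asf)) :
    xp - xs =
      mv ((1 - resolvent UX Aff * Afs * resolvent UY Ass * Asf)⁻¹)
        (mv (1 - resolvent UX Aff * Aff) (mv (UX * UXᵀ) xs - xs) -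
         mv (resolvent UX Aff * Afs * (1 - resolvent UY Ass * Ass))
           (mv (UY * UYᵀ) ys - ys)) ∧
    ‖xp - xs‖ ^ 2 ≤
      2 * specNorm ((1 - resolvent UX Aff * Afs * resolvent UY Ass * Asf)⁻¹) ^ 2 *
        (1 + specNorm Aff / sigmaMin (UXᵀ * Aff * UX)) ^ 2 *
        ‖mv (UX * UXᵀ) xs - xs‖ ^ 2 +
      2 * specNorm ((1 - resolvent UX Aff * Afs * resolvent UY Ass * Asf)⁻¹) ^ 2 *
        (specNorm Afs / sigmaMin (UXᵀ * Aff * UX)) ^ 2 *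
        (1 + specNorm Ass / sigmaMin (UYᵀ * Ass * UY)) ^ 2 *
        ‖mv (UY * UYᵀ) ys - ys‖ ^ 2 := by
  set R1 := resolvent UX Aff
  set R5 := resolvent UY Ass
  set εx := mv (UX * UXᵀ) xs - xs
  set εy := mv (UY * UYᵀ) ys - ys
  have hx := galerkin_error UX Aff Afs b1 hUX h1 hxp hsolx hxs
  have hy := galerkin_error UY Ass Asf b2 hUY h5 hyp (by rwa [add_comm (mv Ass yp)])
    (by rwa [add_comm (mv Ass ys)])
  have hcoupled := mv_one_sub_mul_of_coupled hx hy
  rw [← Matrix.mul_assoc, ← mul_mv (R1 * Afs)] at hcoupled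
  have hident : xp - xs = mv ((1 - R1 * Afs * R5 * Asf)⁻¹)
      (mv (1 - R1 * Aff) εx - mv (R1 * Afs * (1 - R5 * Ass)) εy) := by
    rw [← hcoupled, nonsing_inv_mv_mv hcoup]
  refine ⟨hident, ?_⟩
  set κ := specNorm ((1 - R1 * Afs * R5 * Asf)⁻¹)
  set a := 1 + specNorm Aff / sigmaMin (UXᵀ * Aff * UX)
  set b := specNorm Afs / sigmaMin (UXᵀ * Aff * UX) *
    (1 + specNorm Ass / sigmaMin (UYᵀ * Ass * UY))
  have hu : ‖mv (1 - R1 * Aff) εx‖ ≤ a * ‖εx‖ :=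
    norm_mv_one_sub_resolvent_mul_le UX Aff hUX h1 εx
  have hv : ‖mv (R1 * Afs * (1 - R5 * Ass)) εy‖ ≤ b * ‖εy‖ := by
    rw [mul_mv]
    refine (norm_mv_resolvent_mul_le UX Aff hUX h1 Afs _).trans ?_
    rw [mul_assoc]
    exact mul_le_mul_of_nonneg_left (norm_mv_one_sub_resolvent_mul_le UY Ass hUY h5 εy)
      (div_nonneg (specNorm_nonneg _) (sigmaMin_nonneg _))
  have hbound : ‖xp - xs‖ ≤ κ * (a * ‖εx‖ + b * ‖εy‖) := by
    rw [hident]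
    refine (norm_mv_le _ _).trans (mul_le_mul_of_nonneg_left ?_ (specNorm_nonneg _))
    exact (norm_sub_le _ _).trans (add_le_add hu hv)
  exact (sq_le_of_le_mul_add (norm_nonneg _) hbound).trans_eq (by ring)

end TTSA
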